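/- If Γ[Δ] ⇒ C is a thin sequent provable in L◇_m (each σ_i and τ_i is at most 2 over the whole sequent), and E is an interpolant for Δ satisfying the interpolation bounds σ_i(E) ≤ min(σ_i(Δ), σ_i(Γ[·]⇒C)) and τ_i(E) ≤ min(τ_i(Δ), τ_i(Γ[·]⇒C)), then ||E|| = |⟦Δ⟧|, the reduced word length of the free group interpretation of Δ. -/
import Mathlib


/-- Types of the multimodal bracketed Lambek calculus. -/
inductive ITy where
  | prim : ℕ → ITy
  | ldiv : ITy → ITy → ITy   -- ldiv A B = A \ B
  | rdiv : ITy → ITy → ITy   -- rdiv B A = B / A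
  | mul  : ITy → ITy → ITy
  | dia  : ℕ → ITy → ITy
  | box  : ℕ → ITy → ITy
deriving DecidableEq

/-- Type trees: leaves labeled by types, internal nodes are indexed brackets. -/
inductive ITree where
  | leaf : ITy → ITree
  | node : ℕ → List ITree → ITree

abbrev IHedge := List ITree

/-- Contexts: a hedge with one distinguished hole. -/
inductive ICtx where
  | hole : IHedge → IHedge → ICtx
  | brk  : ℕ → ICtx → IHedge → IHedge → ICtx

/-- Substitution of a hedge for the hole of a context. -/
def ICtx.plug : ICtx → IHedge → IHedge
  | .hole pre post, D => pre ++ D ++ post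
  | .brk i c pre post, D => pre ++ (ITree.node i (c.plug D) :: post)

/-- Generators of the free group: primitive types, left brackets, right brackets. -/
abbrev Gen := ℕ ⊕ ℕ ⊕ ℕ

def lb (i : ℕ) : FreeGroup Gen := FreeGroup.of (Sum.inr (Sum.inl i))
def rb (i : ℕ) : FreeGroup Gen := FreeGroup.of (Sum.inr (Sum.inr i))

/-- Free group interpretation of types. -/
def interpTy : ITy → FreeGroup Gen
  | .prim p => FreeGroup.of (Sum.inl p)
  | .ldiv A B => (interpTy A)⁻¹ * interpTy B
  | .rdiv B A => interpTy B * (interpTy A)⁻¹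
  | .mul A B => interpTy A * interpTy B
  | .dia i A => lb i * interpTy A * rb i
  | .box i A => (lb i)⁻¹ * interpTy A * (rb i)⁻¹

mutual
/-- Free group interpretation of type trees. -/
def interpTree : ITree → FreeGroup Gen
  | .leaf A => interpTy A
  | .node i ts => lb i * interpHedge ts * rb i
/-- Free group interpretation of hedges. -/
def interpHedge : List ITree → FreeGroup Gen
  | [] => 1
  | t :: ts => interpTree t * interpHedge ts
end

/-- Length of a type. -/
def lenTy : ITy → ℕ
  | .prim _ => 1
  | .ldiv A B => lenTy A + lenTy B
  | .rdiv B A => lenTy B + lenTy A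
  | .mul A B => lenTy A + lenTy B
  | .dia _ A => lenTy A + 2
  | .box _ A => lenTy A + 2

/-- Number of occurrences of the primitive type `p_i` in a type. -/
def sigmaTy (i : ℕ) : ITy → ℕ
  | .prim p => if p = i then 1 else 0
  | .ldiv A B => sigmaTy i A + sigmaTy i B
  | .rdiv B A => sigmaTy i B + sigmaTy i A
  | .mul A B => sigmaTy i A + sigmaTy i B
  | .dia _ A => sigmaTy i A
  | .box _ A => sigmaTy i A

/-- Total number of occurrences of `◇_i`, `□↓_i` in a type. -/
def tauTy (i : ℕ) : ITy → ℕ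
  | .prim _ => 0
  | .ldiv A B => tauTy i A + tauTy i B
  | .rdiv B A => tauTy i B + tauTy i A
  | .mul A B => tauTy i A + tauTy i B
  | .dia j A => (if j = i then 1 else 0) + tauTy i A
  | .box j A => (if j = i then 1 else 0) + tauTy i A

mutual
def sigmaTree (i : ℕ) : ITree → ℕ
  | .leaf A => sigmaTy i A
  | .node _ ts => sigmaHedge i ts
def sigmaHedge (i : ℕ) : List ITree → ℕ
  | [] => 0
  | t :: ts => sigmaTree i t + sigmaHedge i ts
end

mutual
/-- Total occurrences of `⟨_i`, `◇_i`, `□↓_i` in a tree. -/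
def tauTree (i : ℕ) : ITree → ℕ
  | .leaf A => tauTy i A
  | .node j ts => (if j = i then 1 else 0) + tauHedge i ts
def tauHedge (i : ℕ) : List ITree → ℕ
  | [] => 0
  | t :: ts => tauTree i t + tauHedge i ts
end

def sigmaCtx (i : ℕ) : ICtx → ℕ
  | .hole pre post => sigmaHedge i pre + sigmaHedge i post
  | .brk _ c pre post => sigmaHedge i pre + sigmaCtx i c + sigmaHedge i post

def tauCtx (i : ℕ) : ICtx → ℕ
  | .hole pre post => tauHedge i pre + tauHedge i post
  | .brk j c pre post => (if j = i then 1 else 0) + tauHedge i pre + tauCtx i c + tauHedge i post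
/-- L◇_m : the multimodal Lambek calculus with brackets
(the antecedent must be nonempty in the right rules for the divisions). -/
inductive IProv : IHedge → ITy → Prop where
  | id (p) : IProv [.leaf (.prim p)] (.prim p)
  | ldivL (G : IHedge) (D : ICtx) (A B C) :
      IProv G A → IProv (D.plug [.leaf B]) C →
      IProv (D.plug (G ++ [.leaf (.ldiv A B)])) C
  | ldivR (Pi : IHedge) (A B) : Pi ≠ [] →
      IProv (.leaf A :: Pi) B → IProv Pi (.ldiv A B)
  | rdivL (G : IHedge) (D : ICtx) (A B C) :
      IProv G A → IProv (D.plug [.leaf B]) C →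
      IProv (D.plug (.leaf (.rdiv B A) :: G)) C
  | rdivR (Pi : IHedge) (A B) : Pi ≠ [] →
      IProv (Pi ++ [.leaf A]) B → IProv Pi (.rdiv B A)
  | mulL (G : ICtx) (A B C) :
      IProv (G.plug [.leaf A, .leaf B]) C → IProv (G.plug [.leaf (.mul A B)]) C
  | mulR (G D : IHedge) (A B) :
      IProv G A → IProv D B → IProv (G ++ D) (.mul A B)
  | diaL (G : ICtx) (i A B) :
      IProv (G.plug [.node i [.leaf A]]) B → IProv (G.plug [.leaf (.dia i A)]) B
  | diaR (G : IHedge) (i A) :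
      IProv G A → IProv [.node i G] (.dia i A)
  | boxL (G : ICtx) (i A B) :
      IProv (G.plug [.leaf A]) B → IProv (G.plug [.node i [.leaf (.box i A)]]) B
  | boxR (G : IHedge) (i A) :
      IProv [.node i G] A → IProv G (.box i A)
  | cut (G : IHedge) (D : ICtx) (A B) :
      IProv G A → IProv (D.plug [.leaf A]) B → IProv (D.plug G) B

/-! ### Auxiliary development -/

section Aux

/-- Left part of the interpretation of a context. -/
def ctxL : ICtx → FreeGroup Gen
  | .hole pre _ => interpHedge pre
  | .brk i c pre _ => interpHedge pre * lb i * ctxL c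

/-- Right part of the interpretation of a context. -/
def ctxR : ICtx → FreeGroup Gen
  | .hole _ post => interpHedge post
  | .brk i c _ post => ctxR c * rb i * interpHedge post

theorem interpHedge_append (xs ys : IHedge) :
    interpHedge (xs ++ ys) = interpHedge xs * interpHedge ys := by
  induction xs with
  | nil => simp [interpHedge]
  | cons t ts ih => simp [interpHedge, ih, mul_assoc]

theorem interpHedge_plug (c : ICtx) (D : IHedge) :
    interpHedge (c.plug D) = ctxL c * interpHedge D * ctxR c := by
  induction c with
  | hole pre post =>
      simp [ICtx.plug, interpHedge_append, ctxL, ctxR, mul_assoc]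
  | brk i c pre post ih =>
      simp [ICtx.plug, interpHedge_append, interpHedge, interpTree, ctxL, ctxR, ih, mul_assoc]

theorem interp_sound {G : IHedge} {A : ITy} (h : IProv G A) :
    interpHedge G = interpTy A := by
  induction h with
  | id p => simp [interpHedge, interpTree, interpTy]
  | ldivL G D A B C _ _ ih1 ih2 =>
      rw [interpHedge_plug] at ih2 ⊢
      rw [interpHedge_append, ih1]
      simp only [interpHedge, interpTree, interpTy] at ih2 ⊢
      rw [← ih2]; group
  | ldivR Pi A B _ _ ih =>
      simp only [interpHedge, interpTree, interpTy] at ih ⊢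
      rw [← ih]; group
  | rdivL G D A B C _ _ ih1 ih2 =>
      rw [interpHedge_plug] at ih2 ⊢
      simp only [interpHedge, interpTree, interpTy, interpHedge_append] at ih2 ⊢
      rw [ih1, ← ih2]; group
  | rdivR Pi A B _ _ ih =>
      rw [interpHedge_append] at ih
      simp only [interpHedge, interpTree, interpTy] at ih ⊢
      rw [← ih]; group
  | mulL G A B C _ ih =>
      rw [interpHedge_plug] at ih ⊢
      simp only [interpHedge, interpTree, interpTy] at ih ⊢
      rw [← ih]; group
  | mulR G D A B _ _ ih1 ih2 =>
      rw [interpHedge_append, ih1, ih2]; rfl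
  | diaL G i A B _ ih =>
      rw [interpHedge_plug] at ih ⊢
      simp only [interpHedge, interpTree, interpTy] at ih ⊢
      rw [← ih]; group
  | diaR G i A _ ih =>
      simp only [interpHedge, interpTree, interpTy]
      rw [ih]; group
  | boxL G i A B _ ih =>
      rw [interpHedge_plug] at ih ⊢
      simp only [interpHedge, interpTree, interpTy] at ih ⊢
      rw [← ih]; group
  | boxR G i A _ ih =>
      simp only [interpHedge, interpTree, interpTy] at ih ⊢
      rw [← ih]; group
  | cut G D A B _ _ ih1 ih2 =>
      rw [interpHedge_plug] at ih2 ⊢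
      simp only [interpHedge, interpTree, interpTy] at ih2
      rw [ih1, ← ih2]; group

theorem sigmaHedge_append (i : ℕ) (xs ys : IHedge) :
    sigmaHedge i (xs ++ ys) = sigmaHedge i xs + sigmaHedge i ys := by
  induction xs with
  | nil => simp [sigmaHedge]
  | cons t ts ih => simp [sigmaHedge, ih]; omega

theorem tauHedge_append (i : ℕ) (xs ys : IHedge) :
    tauHedge i (xs ++ ys) = tauHedge i xs + tauHedge i ys := by
  induction xs with
  | nil => simp [tauHedge]
  | cons t ts ih => simp [tauHedge, ih]; omega

theorem sigmaHedge_plug (i : ℕ) (c : ICtx) (D : IHedge) :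
    sigmaHedge i (c.plug D) = sigmaCtx i c + sigmaHedge i D := by
  induction c with
  | hole pre post => simp [ICtx.plug, sigmaHedge_append, sigmaCtx]; omega
  | brk j c pre post ih =>
      simp [ICtx.plug, sigmaHedge_append, sigmaHedge, sigmaTree, sigmaCtx, ih]; omega

theorem tauHedge_plug (i : ℕ) (c : ICtx) (D : IHedge) :
    tauHedge i (c.plug D) = tauCtx i c + tauHedge i D := by
  induction c with
  | hole pre post => simp [ICtx.plug, tauHedge_append, tauCtx]; omega
  | brk j c pre post ih =>
      simp [ICtx.plug, tauHedge_append, tauHedge, tauTree, tauCtx, ih]; omega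

/-- The word (unreduced) representing the interpretation of a type. -/
def wordTy : ITy → List (Gen × Bool)
  | .prim p => [(Sum.inl p, true)]
  | .ldiv A B => FreeGroup.invRev (wordTy A) ++ wordTy B
  | .rdiv B A => wordTy B ++ FreeGroup.invRev (wordTy A)
  | .mul A B => wordTy A ++ wordTy B
  | .dia i A => (Sum.inr (Sum.inl i), true) :: (wordTy A ++ [(Sum.inr (Sum.inr i), true)])
  | .box i A => (Sum.inr (Sum.inl i), false) :: (wordTy A ++ [(Sum.inr (Sum.inr i), false)])

theorem mk_wordTy (A : ITy) : FreeGroup.mk (wordTy A) = interpTy A := by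
  induction A with
  | prim p => rfl
  | ldiv A B ihA ihB =>
      simp only [wordTy, interpTy, ← FreeGroup.mul_mk, ← FreeGroup.inv_mk, ihA, ihB]
  | rdiv B A ihB ihA =>
      simp only [wordTy, interpTy, ← FreeGroup.mul_mk, ← FreeGroup.inv_mk, ihA, ihB]
  | mul A B ihA ihB =>
      simp only [wordTy, interpTy, ← FreeGroup.mul_mk, ihA, ihB]
  | dia i A ih =>
      show FreeGroup.mk ([(Sum.inr (Sum.inl i), true)] ++
        (wordTy A ++ [(Sum.inr (Sum.inr i), true)])) = _
      simp only [← FreeGroup.mul_mk, ih, interpTy, lb, rb, FreeGroup.of, mul_assoc]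
  | box i A ih =>
      show FreeGroup.mk ([(Sum.inr (Sum.inl i), false)] ++
        (wordTy A ++ [(Sum.inr (Sum.inr i), false)])) = _
      have h1 : FreeGroup.mk ([(Sum.inr (Sum.inl i), false)] : List (Gen × Bool)) = (lb i)⁻¹ := by
        rw [lb, FreeGroup.of, FreeGroup.inv_mk]; rfl
      have h2 : FreeGroup.mk ([(Sum.inr (Sum.inr i), false)] : List (Gen × Bool)) = (rb i)⁻¹ := by
        rw [rb, FreeGroup.of, FreeGroup.inv_mk]; rfl
      simp only [← FreeGroup.mul_mk, ih, interpTy, h1, h2, mul_assoc]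

theorem wordTy_length (A : ITy) : (wordTy A).length = lenTy A := by
  induction A <;> simp_all [wordTy, lenTy, FreeGroup.invRev] <;> omega

/-- Number of occurrences of a generator (ignoring sign) in a type's word. -/
def genCount (g : Gen) (A : ITy) : ℕ :=
  match g with
  | Sum.inl p => sigmaTy p A
  | Sum.inr (Sum.inl i) => tauTy i A
  | Sum.inr (Sum.inr i) => tauTy i A

/-- Occurrences of a generator (ignoring sign) in a word. -/
def cnt (g : Gen) : List (Gen × Bool) → ℕ
  | [] => 0
  | x :: t => (if x.1 = g then 1 else 0) + cnt g t

theorem cnt_append (g : Gen) (l r : List (Gen × Bool)) :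
    cnt g (l ++ r) = cnt g l + cnt g r := by
  induction l with
  | nil => simp [cnt]
  | cons x t ih => simp [cnt, ih]; omega

theorem cnt_reverse (g : Gen) (l : List (Gen × Bool)) :
    cnt g l.reverse = cnt g l := by
  induction l with
  | nil => rfl
  | cons x t ih => simp [cnt, List.reverse_cons, cnt_append, ih]; omega

theorem cnt_invRev (g : Gen) (w : List (Gen × Bool)) :
    cnt g (FreeGroup.invRev w) = cnt g w := by
  rw [FreeGroup.invRev, cnt_reverse]
  induction w with
  | nil => rfl
  | cons x t ih => simp [cnt, ih]

theorem count_wordTy (g : Gen) (A : ITy) :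
    cnt g (wordTy A) = genCount g A := by
  induction A with
  | prim p =>
      rcases g with p' | (i | i) <;>
        simp [wordTy, cnt, genCount, sigmaTy, tauTy]
  | ldiv A B ihA ihB =>
      rcases g with p' | (i | i) <;>
        simp only [wordTy, cnt_append, cnt_invRev, genCount, sigmaTy, tauTy] at * <;> omega
  | rdiv B A ihB ihA =>
      rcases g with p' | (i | i) <;>
        simp only [wordTy, cnt_append, cnt_invRev, genCount, sigmaTy, tauTy] at * <;> omega
  | mul A B ihA ihB =>
      rcases g with p' | (i | i) <;>
        simp only [wordTy, cnt_append, genCount, sigmaTy, tauTy] at * <;> omega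
  | dia j A ih =>
      rcases g with p' | (i | i) <;>
        simp only [wordTy, cnt, cnt_append, genCount, sigmaTy, tauTy,
          Sum.inr.injEq, Sum.inl.injEq, reduceCtorEq, if_false, if_true] at * <;>
        (try split_ifs) <;> omega
  | box j A ih =>
      rcases g with p' | (i | i) <;>
        simp only [wordTy, cnt, cnt_append, genCount, sigmaTy, tauTy,
          Sum.inr.injEq, Sum.inl.injEq, reduceCtorEq, if_false, if_true] at * <;>
        (try split_ifs) <;> omega

/-- A word in which every generator occurs at most once is reduced. -/
theorem reduce_eq_self_of_count_le_one (w : List (Gen × Bool))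
    (h : ∀ g : Gen, cnt g w ≤ 1) :
    FreeGroup.reduce w = w := by
  induction w with
  | nil => rfl
  | cons x t ih =>
      have ht : FreeGroup.reduce t = t := by
        refine ih fun g => le_trans ?_ (h g)
        simp [cnt]
      rw [FreeGroup.reduce.cons, ht]
      cases t with
      | nil => rfl
      | cons y t' =>
          have hx : x.1 ≠ y.1 := by
            intro hxy
            have h2 := h y.1
            simp [cnt, hxy] at h2
          simp [hx]

end Aux

/-- For a thin provable sequent `Γ[Δ] ⇒ C`, any interpolant `E` for `Δ` satisfying the
interpolation bounds has length equal to the reduced word length of `⟦Δ⟧`. -/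
theorem thin_interpolant_len_eq_norm (G : ICtx) (D : IHedge) (C E : ITy)
    (hprov : IProv (G.plug D) C)
    (hthin_s : ∀ i, sigmaHedge i (G.plug D) + sigmaTy i C ≤ 2)
    (hthin_t : ∀ i, tauHedge i (G.plug D) + tauTy i C ≤ 2)
    (hE1 : IProv D E)
    (hE2 : IProv (G.plug [.leaf E]) C)
    (hs : ∀ i, sigmaTy i E ≤ min (sigmaHedge i D) (sigmaCtx i G + sigmaTy i C))
    (ht : ∀ i, tauTy i E ≤ min (tauHedge i D) (tauCtx i G + tauTy i C)) :
    lenTy E = (interpHedge D).norm := by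
  have hDE : interpHedge D = interpTy E := interp_sound hE1
  -- bounds on occurrences in E
  have hcount : ∀ g : Gen, cnt g (wordTy E) ≤ 1 := by
    intro g
    rw [count_wordTy]
    rcases g with p | (i | i)
    · have h1 := hs p
      have h2 := hthin_s p
      rw [sigmaHedge_plug] at h2
      simp only [genCount]
      omega
    · have h1 := ht i
      have h2 := hthin_t i
      rw [tauHedge_plug] at h2
      simp only [genCount]
      omega
    · have h1 := ht i
      have h2 := hthin_t i
      rw [tauHedge_plug] at h2
      simp only [genCount]
      omega
  have hred : FreeGroup.reduce (wordTy E) = wordTy E :=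
    reduce_eq_self_of_count_le_one _ hcount
  calc lenTy E = (wordTy E).length := (wordTy_length E).symm
    _ = (FreeGroup.reduce (wordTy E)).length := by rw [hred]
    _ = (FreeGroup.mk (wordTy E)).norm := by
        rw [FreeGroup.norm, FreeGroup.toWord_mk]
    _ = (interpHedge D).norm := by rw [mk_wordTy, hDE]
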